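/- For every n ≥ 1, the map σ ↦ Majcode⁻¹(δ(Majcode σ)) is an involution on S_n sending each permutation with descent set D to a permutation with descent set {1,…,n−1} ∖ D; consequently the generating polynomial F(q) = ∑_{σ∈S_n} q^{maj σ} satisfies F(q) = q^{n(n−1)/2} F(1/q). -/

import Mathlib

/-- Descent set (ligne of route) of a word, with 1-based positions. -/
def ligne (w : List ℕ) : Finset ℕ :=
  (Finset.Icc 1 (w.length - 1)).filter (fun i => w.getD (i-1) 0 > w.getD i 0)

/-- Major index of a word. -/
def maj (w : List ℕ) : ℕ := ∑ i ∈ ligne w, i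

/-- Inversion number of a word. -/
def inv (w : List ℕ) : ℕ :=
  ((Finset.range w.length ×ˢ Finset.range w.length).filter
    (fun p => p.1 < p.2 ∧ w.getD p.1 0 > w.getD p.2 0)).card

/-- `w` is (the one-line word of) a permutation of `1,…,n`. -/
def IsPermWord (n : ℕ) (w : List ℕ) : Prop := w.Perm (List.range' 1 n)

/-- One-line word of `σ ∈ S_n` with values in `1,…,n`. -/
def toWord {n : ℕ} (σ : Equiv.Perm (Fin n)) : List ℕ := List.ofFn (fun i => (σ i : ℕ) + 1)

/-- Subexcedent word: `0 ≤ d_i ≤ i-1` (1-based), i.e. `d_i ≤ i` for 0-based `i`. -/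
def Subexcedent (w : List ℕ) : Prop := ∀ i < w.length, w.getD i 0 ≤ i

/-- Subdiagonal word: `0 ≤ d_i ≤ n-i` (1-based). -/
def Subdiagonal (w : List ℕ) : Prop := ∀ i < w.length, w.getD i 0 + i + 1 ≤ w.length

/-- Lehmer code: `d_i = #{j < i : x_j > x_i}`. -/
def invcode (w : List ℕ) : List ℕ :=
  (List.range w.length).map (fun i => ((Finset.range i).filter (fun j => w.getD j 0 > w.getD i 0)).card)

/-- `Lc`-code: `d_i = #{j > i : x_i > x_j}`. -/
def lc (w : List ℕ) : List ℕ :=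
  (List.range w.length).map (fun i => ((Finset.Ico (i+1) w.length).filter (fun j => w.getD i 0 > w.getD j 0)).card)

/-- Major index code: `d_i = maj(σ|_i) - maj(σ|_{i-1})`, where `σ|_i` erases letters `> i`. -/
def majcode (w : List ℕ) : List ℕ :=
  (List.range w.length).map (fun i => maj (w.filter (· ≤ i+1)) - maj (w.filter (· ≤ i)))

/-- `Mc`-code: `d_i = maj(σ^{(i)}) - maj(σ^{(i+1)})`, where `σ^{(i)}` erases letters `< i`. -/
def mc (w : List ℕ) : List ℕ :=
  (List.range w.length).map (fun i => maj (w.filter (fun x => i+1 ≤ x)) - maj (w.filter (fun x => i+2 ≤ x)))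

/-- One-line word of the inverse permutation. -/
def invWord (w : List ℕ) : List ℕ :=
  (List.range w.length).map (fun i => w.idxOf (i+1) + 1)

/-- `Ic σ = Lc (σ⁻¹)`. -/
def ic (w : List ℕ) : List ℕ := lc (invWord w)

/-- Inverse ligne of route. -/
def iligne (w : List ℕ) : Finset ℕ := ligne (invWord w)

/-- Complement map `δ` on codes: `δ(d₁⋯d_n) = (0-d₁)(1-d₂)⋯(n-1-d_n)`. -/
def deltaC (w : List ℕ) : List ℕ :=
  (List.range w.length).map (fun i => i - w.getD i 0)

/-- Nondecreasing rearrangement of a word. -/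
def sortW (w : List ℕ) : List ℕ := List.insertionSort (· ≤ ·) w

/-- Set-valued statistic `El = Ligne ∘ Mc⁻¹` on subdiagonal words. -/
noncomputable def El (d : List ℕ) : Finset ℕ := by
  classical
  exact if h : ∃ w, IsPermWord d.length w ∧ mc w = d then ligne h.choose else ∅

/-- Set-valued statistic `Eul = Ligne ∘ Majcode⁻¹` on subexcedent words. -/
noncomputable def Eul (d : List ℕ) : Finset ℕ := by
  classical
  exact if h : ∃ w, IsPermWord d.length w ∧ majcode w = d then ligne h.choose else ∅

/-!
Inserting a letter larger than all others into slot `p` of a word of length `m` with descent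
set `L` produces the descent set `insertDescents L p m`. For every slot `p` there is a slot
`dualSlot L m p` such that inserting into a word with the complementary descent set gives the
complementary descent set, and `dualSlot` is an involution. Building a word letter by letter and
always using the dual slot gives an involution `majDual` that complements the descent set of
every restriction `σ|_i`, so `maj (majDual σ)|_i + maj σ|_i = i (i - 1) / 2` for all `i`;
taking differences in `i` gives `Majcode (majDual σ) = δ (Majcode σ)`. The symmetry of the
generating function comes from `σ ↦ rev ∘ σ`, which also complements the descent set.
-/

open Finset

namespace List

variable {α : Type*}

theorem insertIdx_eq_take_append_cons_drop (l : List α) (a : α) {p : ℕ} (hp : p ≤ l.length) :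
    l.insertIdx p a = l.take p ++ a :: l.drop p := by
  obtain ⟨l₁, l₂, rfl, rfl, h⟩ := exists_of_modifyTailIdx (cons a) hp
  simpa [insertIdx] using h

theorem filter_insertIdx_of_neg {P : α → Bool} {l : List α} {a : α} {p : ℕ}
    (hp : p ≤ l.length) (ha : ¬P a) : (l.insertIdx p a).filter P = l.filter P := by
  rw [insertIdx_eq_take_append_cons_drop _ _ hp, filter_append, filter_cons_of_neg ha,
    ← filter_append, take_append_drop]

theorem idxOf_insertIdx_self [BEq α] [LawfulBEq α] {l : List α} {a : α} {p : ℕ}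
    (hp : p ≤ l.length) (ha : a ∉ l) : (l.insertIdx p a).idxOf a = p := by
  rw [insertIdx_eq_take_append_cons_drop _ _ hp, idxOf_append,
    if_neg fun h => ha (mem_of_mem_take h), idxOf_cons_self, length_take_of_le hp, zero_add]

theorem Nodup.insertIdx_filter_ne_idxOf [BEq α] [LawfulBEq α] {l : List α} (hl : l.Nodup)
    {a : α} (ha : a ∈ l) : (l.filter (· != a)).insertIdx (l.idxOf a) a = l := by
  have hlt : l.idxOf a < l.length := idxOf_lt_length_iff.2 ha
  rw [← hl.erase_eq_filter, erase_eq_eraseIdx_of_idxOf rfl]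
  conv_rhs => rw [← insertIdx_eraseIdx_getElem hlt, getElem_idxOf hlt]

end List

theorem isPermWord_iff {n : ℕ} {w : List ℕ} :
    IsPermWord n w ↔ w.Nodup ∧ ∀ x, x ∈ w ↔ 1 ≤ x ∧ x ≤ n := by
  have hr : ∀ x, x ∈ List.range' 1 n ↔ 1 ≤ x ∧ x ≤ n := fun x => by
    rw [List.mem_range'_1]; omega
  refine ⟨fun h => ⟨h.nodup_iff.2 List.nodup_range', fun x => h.mem_iff.trans (hr x)⟩,
    fun ⟨hw, hmem⟩ => (List.perm_ext_iff_of_nodup hw List.nodup_range').2 fun x => ?_⟩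
  rw [hmem, hr]

namespace IsPermWord

variable {n : ℕ} {w : List ℕ}

theorem length_eq (h : IsPermWord n w) : w.length = n := by
  simpa using List.Perm.length_eq h

theorem mem_iff (h : IsPermWord n w) {x : ℕ} : x ∈ w ↔ 1 ≤ x ∧ x ≤ n :=
  (isPermWord_iff.1 h).2 x

theorem filter_le (h : IsPermWord n w) {k : ℕ} (hk : k ≤ n) :
    IsPermWord k (w.filter (· ≤ k)) := by
  refine isPermWord_iff.2 ⟨(isPermWord_iff.1 h).1.filter _, fun x => ?_⟩
  rw [List.mem_filter, h.mem_iff, decide_eq_true_iff]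
  omega

theorem insertIdx_succ (h : IsPermWord n w) {p : ℕ} (hp : p ≤ n) :
    IsPermWord (n + 1) (w.insertIdx p (n + 1)) := by
  have hperm := List.perm_insertIdx (n + 1) w (h.length_eq ▸ hp)
  refine isPermWord_iff.2 ⟨hperm.nodup_iff.2 (List.nodup_cons.2 ⟨?_, (isPermWord_iff.1 h).1⟩),
    fun x => ?_⟩
  · rw [h.mem_iff]
    omega
  · rw [hperm.mem_iff, List.mem_cons, h.mem_iff]
    omega

theorem idxOf_le (h : IsPermWord (n + 1) w) : w.idxOf (n + 1) ≤ n := by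
  have := List.idxOf_lt_length_iff.2 (h.mem_iff.2 ⟨by omega, le_rfl⟩)
  rw [h.length_eq] at this
  omega

theorem insertIdx_filter_le_idxOf (h : IsPermWord (n + 1) w) :
    (w.filter (· ≤ n)).insertIdx (w.idxOf (n + 1)) (n + 1) = w := by
  have hfilter : w.filter (· ≤ n) = w.filter (· != n + 1) := List.filter_congr fun x hx => by
    have := h.mem_iff.1 hx
    rw [Bool.eq_iff_iff, decide_eq_true_iff, bne_iff_ne]
    omega
  rw [hfilter]
  exact (isPermWord_iff.1 h).1.insertIdx_filter_ne_idxOf (h.mem_iff.2 ⟨by omega, le_rfl⟩)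

theorem lt_succ_of_mem (h : IsPermWord n w) {x : ℕ} (hx : x ∈ w) : x < n + 1 := by
  have := h.mem_iff.1 hx
  omega

theorem filter_le_self (h : IsPermWord n w) : w.filter (· ≤ n) = w :=
  List.filter_eq_self.2 fun _ hx => decide_eq_true (h.mem_iff.1 hx).2

theorem filter_insertIdx_succ (h : IsPermWord n w) {p : ℕ} (hp : p ≤ n) :
    (w.insertIdx p (n + 1)).filter (· ≤ n) = w := by
  rw [List.filter_insertIdx_of_neg (h.length_eq ▸ hp) (by simp), h.filter_le_self]

theorem idxOf_insertIdx_succ (h : IsPermWord n w) {p : ℕ} (hp : p ≤ n) :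
    (w.insertIdx p (n + 1)).idxOf (n + 1) = p :=
  List.idxOf_insertIdx_self (h.length_eq ▸ hp) fun hmem => (h.lt_succ_of_mem hmem).ne rfl

end IsPermWord

theorem mem_ligne {w : List ℕ} {i : ℕ} :
    i ∈ ligne w ↔ 1 ≤ i ∧ i ≤ w.length - 1 ∧ w[i]?.getD 0 < w[i - 1]?.getD 0 := by
  simp [ligne, and_assoc]

theorem ligne_subset (w : List ℕ) : ligne w ⊆ Icc 1 (w.length - 1) :=
  filter_subset _ _

/-- Slot `p ≤ m` puts the new letter at 0-based index `p`; descents are 1-based, as in `ligne`. -/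
def insertDescents (L : Finset ℕ) (p m : ℕ) : Finset ℕ :=
  L.filter (· < p) ∪ (if p < m then {p + 1} else ∅) ∪ (L.filter (p < ·)).image (· + 1)

section insertDescents

variable {L : Finset ℕ} {p m : ℕ}

theorem mem_insertDescents {x : ℕ} :
    x ∈ insertDescents L p m ↔
      (x ∈ L ∧ x < p) ∨ (p < m ∧ x = p + 1) ∨ (x - 1 ∈ L ∧ p + 1 < x) := by
  simp only [insertDescents, mem_union, mem_filter, mem_image]
  constructor
  · rintro ((hx | hx) | ⟨j, hj, rfl⟩)
    · exact Or.inl hx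
    · split_ifs at hx with h
      · exact Or.inr (Or.inl ⟨h, mem_singleton.1 hx⟩)
      · exact absurd hx (notMem_empty x)
    · exact Or.inr (Or.inr ⟨by simpa using hj.1, by omega⟩)
  · rintro (hx | ⟨h, rfl⟩ | ⟨hx, hpx⟩)
    · exact Or.inl (Or.inl hx)
    · exact Or.inl (Or.inr (by simp [h]))
    · exact Or.inr ⟨x - 1, ⟨hx, by omega⟩, by omega⟩

theorem insertDescents_subset (hL : L ⊆ Icc 1 (m - 1)) :
    insertDescents L p m ⊆ Icc 1 m := by
  intro x hx
  have hL' : ∀ y ∈ L, 1 ≤ y ∧ y ≤ m - 1 := fun y hy => mem_Icc.1 (hL hy)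
  rw [mem_Icc]
  rcases mem_insertDescents.1 hx with ⟨hx, -⟩ | ⟨hpm, rfl⟩ | ⟨hx, -⟩
  · have := hL' x hx; omega
  · omega
  · have := hL' _ hx; omega

theorem sum_le_sum_insertDescents (hL : L ⊆ Icc 1 (m - 1)) :
    ∑ i ∈ L, i ≤ ∑ i ∈ insertDescents L p m, i := by
  let shift : ℕ → ℕ := fun j => if j < p then j else j + 1
  have hinj : Set.InjOn shift L := fun a _ b _ h => by
    simp only [shift] at h
    split_ifs at h <;> omega
  have hmaps : L.image shift ⊆ insertDescents L p m := by
    intro x hx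
    obtain ⟨j, hj, rfl⟩ := mem_image.1 hx
    have := mem_Icc.1 (hL hj)
    rw [mem_insertDescents]
    simp only [shift]
    split_ifs with h
    · exact Or.inl ⟨hj, h⟩
    · rcases eq_or_lt_of_le (not_lt.1 h) with rfl | hpj
      · exact Or.inr (Or.inl ⟨by omega, rfl⟩)
      · exact Or.inr (Or.inr ⟨by simpa using hj, by omega⟩)
  calc ∑ i ∈ L, i ≤ ∑ i ∈ L, shift i := sum_le_sum fun j _ => by
        simp only [shift]
        split_ifs <;> omega
    _ = ∑ i ∈ L.image shift, i := by rw [sum_image hinj]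
    _ ≤ ∑ i ∈ insertDescents L p m, i := sum_le_sum_of_subset hmaps

theorem insertDescents_compl {q : ℕ} (hL : L ⊆ Icc 1 (m - 1))
    (hp : p ∈ L ∨ p = m) (hq : q ∈ L ∨ q = 0) (hqp : q < p)
    (hgap : ∀ j ∈ L, ¬(q < j ∧ j < p)) :
    insertDescents (Icc 1 (m - 1) \ L) q m = Icc 1 m \ insertDescents L p m := by
  have hL' : ∀ y ∈ L, 1 ≤ y ∧ y ≤ m - 1 := fun y hy => mem_Icc.1 (hL hy)
  ext x
  simp only [mem_insertDescents, mem_sdiff, mem_Icc]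
  -- Split on the position of `x` relative to `q < p`; `hgap` says every `q < x < p` is an ascent.
  grind

end insertDescents

theorem ligne_insertIdx {v : List ℕ} {a p : ℕ} (hp : p ≤ v.length) (ha : ∀ x ∈ v, x < a) :
    ligne (v.insertIdx p a) = insertDescents (ligne v) p v.length := by
  have hlt : ∀ k < v.length, v[k]?.getD 0 < a := fun k hk => by
    rw [List.getElem?_eq_getElem hk, Option.getD_some]
    exact ha _ (List.getElem_mem hk)
  ext i
  simp only [mem_insertDescents, mem_ligne, List.length_insertIdx_of_le_length hp,
    List.getElem?_insertIdx]
  have := hlt (i - 1)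
  split_ifs <;> (try simp only [Option.getD_some, Option.getD_none]) <;> omega

theorem maj_le_maj_insertIdx {v : List ℕ} {a p : ℕ} (hp : p ≤ v.length)
    (ha : ∀ x ∈ v, x < a) : maj v ≤ maj (v.insertIdx p a) := by
  rw [maj, maj, ligne_insertIdx hp ha]
  exact sum_le_sum_insertDescents (ligne_subset v)

/-- With the convention `x₀ = x_{m+1} = 0`, slot `m` follows a descent and slot `0` an ascent.
The dual of a slot after a descent is the previous descent (or `0`), that of a slot after an
ascent is the next ascent (or `m`). -/
def dualSlot (L : Finset ℕ) (m p : ℕ) : ℕ :=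
  if p ∈ L ∨ p = m then (insert 0 (L.filter (· < p))).max' (insert_nonempty _ _)
  else (insert m ((Icc 1 (m - 1) \ L).filter (p < ·))).min' (insert_nonempty _ _)

section dualSlot

variable {L : Finset ℕ} {m p q : ℕ}

theorem dualSlot_of_descent (hL : L ⊆ Icc 1 (m - 1)) (hm : 1 ≤ m) (h : p ∈ L ∨ p = m) :
    (dualSlot L m p ∈ L ∨ dualSlot L m p = 0) ∧ dualSlot L m p < p ∧
      ∀ j ∈ L, ¬(dualSlot L m p < j ∧ j < p) := by
  have hp : 1 ≤ p := h.elim (fun h => (mem_Icc.1 (hL h)).1) (· ▸ hm)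
  rw [dualSlot, if_pos h]
  have hmem := max'_mem (insert 0 (L.filter (· < p))) (insert_nonempty _ _)
  have hle := fun j hj => le_max' (insert 0 (L.filter (· < p))) j hj
  simp only [mem_insert, mem_filter] at hmem hle
  refine ⟨hmem.elim Or.inr (Or.inl ·.1), by omega, fun j hj hqj => ?_⟩
  have := hle j (Or.inr ⟨hj, hqj.2⟩)
  omega

theorem dualSlot_of_not_descent (hp : p ≤ m) (h : ¬(p ∈ L ∨ p = m)) :
    (dualSlot L m p ∈ Icc 1 (m - 1) \ L ∨ dualSlot L m p = m) ∧ p < dualSlot L m p ∧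
      dualSlot L m p ≤ m ∧ ∀ j ∈ Icc 1 (m - 1) \ L, ¬(p < j ∧ j < dualSlot L m p) := by
  rw [dualSlot, if_neg h]
  have hmem := min'_mem (insert m ((Icc 1 (m - 1) \ L).filter (p < ·))) (insert_nonempty _ _)
  have hle := fun j hj => min'_le (insert m ((Icc 1 (m - 1) \ L).filter (p < ·))) j hj
  simp only [mem_insert, mem_filter] at hmem hle
  have hm := hle m (Or.inl rfl)
  refine ⟨hmem.elim Or.inr (Or.inl ·.1), by omega, hm, fun j hj hpj => ?_⟩
  have := hle j (Or.inr ⟨hj, hpj.1⟩)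
  omega

theorem dualSlot_eq_of_descent (h : p ∈ L ∨ p = m) (hq : q ∈ L ∨ q = 0) (hqp : q < p)
    (hgap : ∀ j ∈ L, ¬(q < j ∧ j < p)) : dualSlot L m p = q := by
  rw [dualSlot, if_pos h]
  refine le_antisymm (max'_le _ _ _ fun j hj => ?_) (le_max' _ _ ?_)
  · rcases mem_insert.1 hj with rfl | hj
    · exact Nat.zero_le q
    · obtain ⟨hjL, hjp⟩ := mem_filter.1 hj
      have := hgap j hjL
      omega
  · rcases hq with hq | rfl
    · exact mem_insert_of_mem (mem_filter.2 ⟨hq, hqp⟩)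
    · exact mem_insert_self 0 _

theorem dualSlot_eq_of_not_descent (h : ¬(p ∈ L ∨ p = m))
    (hq : q ∈ Icc 1 (m - 1) \ L ∨ q = m) (hpq : p < q)
    (hgap : ∀ j ∈ Icc 1 (m - 1) \ L, ¬(p < j ∧ j < q)) : dualSlot L m p = q := by
  rw [dualSlot, if_neg h]
  refine le_antisymm (min'_le _ _ ?_) (le_min' _ _ _ fun j hj => ?_)
  · rcases hq with hq | rfl
    · exact mem_insert_of_mem (mem_filter.2 ⟨hq, hpq⟩)
    · exact mem_insert_self _ _
  · rcases mem_insert.1 hj with rfl | hj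
    · rcases hq with hq | rfl
      · have := (mem_Icc.1 (mem_sdiff.1 hq).1).2
        omega
      · exact le_rfl
    · obtain ⟨hjL, hjp⟩ := mem_filter.1 hj
      have := hgap j hjL
      omega

theorem dualSlot_spec (hL : L ⊆ Icc 1 (m - 1)) (hp : p ≤ m) :
    dualSlot L m p ≤ m ∧
      insertDescents (Icc 1 (m - 1) \ L) (dualSlot L m p) m = Icc 1 m \ insertDescents L p m ∧
      dualSlot (Icc 1 (m - 1) \ L) m (dualSlot L m p) = p := by
  rcases Nat.eq_zero_or_pos m with rfl | hm
  · obtain rfl : p = 0 := by omega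
    obtain rfl : L = ∅ := subset_empty.1 hL
    simp [dualSlot, insertDescents]
  have hLc : Icc 1 (m - 1) \ (Icc 1 (m - 1) \ L) = L := Finset.sdiff_sdiff_eq_self hL
  by_cases h : p ∈ L ∨ p = m
  · obtain ⟨hq, hqp, hgap⟩ := dualSlot_of_descent hL hm h
    refine ⟨by omega, insertDescents_compl hL h hq hqp hgap,
      dualSlot_eq_of_not_descent ?_ ?_ hqp ?_⟩
    · rintro (hq' | hq')
      · rcases hq with hq | hq
        · exact (mem_sdiff.1 hq').2 hq
        · simp [hq] at hq'
      · omega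
    · rwa [hLc]
    · rwa [hLc]
  · obtain ⟨hq, hpq, hqm, hgap⟩ := dualSlot_of_not_descent hp h
    have hp' : p ∈ Icc 1 (m - 1) \ L ∨ p = 0 := by
      rcases Nat.eq_zero_or_pos p with hp0 | hp0
      · exact Or.inr hp0
      · exact Or.inl (mem_sdiff.2 ⟨mem_Icc.2 ⟨hp0, by omega⟩, fun hpL => h (Or.inl hpL)⟩)
    have hcompl := insertDescents_compl sdiff_subset hq hp' hpq hgap
    rw [hLc] at hcompl
    refine ⟨hqm, ?_, dualSlot_eq_of_descent hq hp' hpq hgap⟩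
    rw [hcompl, Finset.sdiff_sdiff_eq_self (insertDescents_subset sdiff_subset)]

end dualSlot

namespace IsPermWord

variable {n : ℕ} {w : List ℕ}

theorem ligne_subset (h : IsPermWord n w) : ligne w ⊆ Icc 1 (n - 1) :=
  h.length_eq ▸ _root_.ligne_subset w

theorem ligne_insertIdx_succ (h : IsPermWord n w) {p : ℕ} (hp : p ≤ n) :
    ligne (w.insertIdx p (n + 1)) = insertDescents (ligne w) p n := by
  rw [ligne_insertIdx (h.length_eq ▸ hp) fun _ => h.lt_succ_of_mem, h.length_eq]

theorem exists_eq_insertIdx (h : IsPermWord (n + 1) w) :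
    ∃ v p, IsPermWord n v ∧ p ≤ n ∧ w = v.insertIdx p (n + 1) :=
  ⟨_, _, h.filter_le n.le_succ, h.idxOf_le, h.insertIdx_filter_le_idxOf.symm⟩

theorem maj_filter_le_mono (h : IsPermWord n w) {k : ℕ} (hk : k < n) :
    maj (w.filter (· ≤ k)) ≤ maj (w.filter (· ≤ k + 1)) := by
  obtain ⟨v, p, hv, hp, hw⟩ := (h.filter_le hk).exists_eq_insertIdx
  have hrestrict : (w.filter (· ≤ k + 1)).filter (· ≤ k) = w.filter (· ≤ k) := by
    rw [List.filter_filter]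
    exact List.filter_congr fun x _ => by grind
  rw [← hrestrict, hw, hv.filter_insertIdx_succ hp]
  exact maj_le_maj_insertIdx (hv.length_eq ▸ hp) fun _ => hv.lt_succ_of_mem

end IsPermWord

theorem maj_add_maj_of_ligne_eq_sdiff {u w : List ℕ} {n : ℕ} (hw : w.length = n)
    (h : ligne u = Icc 1 (n - 1) \ ligne w) : maj u + maj w = ∑ i ∈ range n, i := by
  rw [maj, maj, h, sum_sdiff (hw ▸ ligne_subset w)]
  refine sum_subset (fun x hx => ?_) fun x hx hnx => ?_
  · simp only [mem_Icc, mem_range] at hx ⊢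
    omega
  · simp only [mem_Icc, mem_range] at hx hnx
    omega

def majDual : ℕ → List ℕ → List ℕ
  | 0, _ => []
  | n + 1, w =>
      (majDual n (w.filter (· ≤ n))).insertIdx
        (dualSlot (ligne (w.filter (· ≤ n))) n (w.idxOf (n + 1))) (n + 1)

theorem majDual_insertIdx_succ {n p : ℕ} {v : List ℕ} (hv : IsPermWord n v) (hp : p ≤ n) :
    majDual (n + 1) (v.insertIdx p (n + 1)) =
      (majDual n v).insertIdx (dualSlot (ligne v) n p) (n + 1) := by
  rw [majDual, hv.filter_insertIdx_succ hp, hv.idxOf_insertIdx_succ hp]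

theorem majDual_spec : ∀ {n : ℕ} {w : List ℕ}, IsPermWord n w →
    IsPermWord n (majDual n w) ∧ ligne (majDual n w) = Icc 1 (n - 1) \ ligne w ∧
      majDual n (majDual n w) = w
  | 0, w, h => by
    obtain rfl : w = [] := List.length_eq_zero_iff.1 h.length_eq
    exact ⟨h, rfl, rfl⟩
  | n + 1, _, h => by
    obtain ⟨v, p, hv, hp, rfl⟩ := h.exists_eq_insertIdx
    obtain ⟨hu, hligne, hinv⟩ := majDual_spec hv
    obtain ⟨hq, hcompl, hqq⟩ := dualSlot_spec hv.ligne_subset hp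
    rw [majDual_insertIdx_succ hv hp]
    refine ⟨hu.insertIdx_succ hq, ?_, ?_⟩
    · rw [hu.ligne_insertIdx_succ hq, hligne, hcompl, hv.ligne_insertIdx_succ hp]
      rfl
    · rw [majDual_insertIdx_succ hu hq, hinv, hligne, hqq]

theorem majDual_filter_le :
    ∀ {n : ℕ} {w : List ℕ}, IsPermWord n w → ∀ {k : ℕ}, k ≤ n →
      (majDual n w).filter (· ≤ k) = majDual k (w.filter (· ≤ k))
  | 0, _, _, _, hk => by
    obtain rfl : _ = 0 := Nat.le_zero.1 hk
    rfl
  | n + 1, w, h, k, hk => by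
    rcases hk.eq_or_lt with rfl | hk
    · rw [(majDual_spec h).1.filter_le_self, h.filter_le_self]
    obtain ⟨v, p, hv, hp, rfl⟩ := h.exists_eq_insertIdx
    have hq := (dualSlot_spec hv.ligne_subset hp).1
    rw [majDual_insertIdx_succ hv hp,
      List.filter_insertIdx_of_neg (by rwa [(majDual_spec hv).1.length_eq]) (by simpa using hk),
      List.filter_insertIdx_of_neg (hv.length_eq ▸ hp) (by simpa using hk),
      majDual_filter_le hv (Nat.lt_succ_iff.1 hk)]

theorem maj_majDual_add {n : ℕ} {w : List ℕ} (h : IsPermWord n w) :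
    maj (majDual n w) + maj w = ∑ i ∈ range n, i :=
  maj_add_maj_of_ligne_eq_sdiff h.length_eq (majDual_spec h).2.1

theorem majcode_majDual {n : ℕ} {w : List ℕ} (h : IsPermWord n w) :
    majcode (majDual n w) = deltaC (majcode w) := by
  have hu := (majDual_spec h).1
  simp only [majcode, deltaC, hu.length_eq, h.length_eq, List.length_map, List.length_range]
  refine List.map_congr_left fun i hi => ?_
  rw [List.mem_range] at hi
  simp only [List.getD_eq_getElem?_getD, List.getElem?_map, List.getElem?_range hi,
    Option.map_some, Option.getD_some]
  have hrestrict (k : ℕ) (hk : k ≤ n) :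
      maj ((majDual n w).filter (· ≤ k)) + maj (w.filter (· ≤ k)) = ∑ j ∈ range k, j := by
    rw [majDual_filter_le h hk]
    exact maj_majDual_add (h.filter_le hk)
  have h1 := hrestrict (i + 1) hi
  have h0 := hrestrict i hi.le
  have hw := h.maj_filter_le_mono hi
  have hu' := hu.maj_filter_le_mono hi
  rw [sum_range_succ] at h1
  -- the monotonicity facts make the truncated subtractions in `majcode` and `deltaC` exact
  omega

theorem length_toWord {n : ℕ} (σ : Equiv.Perm (Fin n)) : (toWord σ).length = n := by
  simp [toWord]

theorem getElem?_toWord {n : ℕ} (σ : Equiv.Perm (Fin n)) {i : ℕ} (hi : i < n) :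
    (toWord σ)[i]? = some ((σ ⟨i, hi⟩ : ℕ) + 1) := by
  simp [toWord, hi]

theorem ligne_toWord_revPerm_mul {n : ℕ} (σ : Equiv.Perm (Fin n)) :
    ligne (toWord (Fin.revPerm * σ)) = Icc 1 (n - 1) \ ligne (toWord σ) := by
  ext i
  simp only [mem_sdiff, mem_Icc, mem_ligne, length_toWord]
  by_cases hi : 1 ≤ i ∧ i ≤ n - 1
  · have hne : (σ ⟨i - 1, by omega⟩ : ℕ) ≠ σ ⟨i, by omega⟩ := fun h => by
      have := congrArg Fin.val (σ.injective (Fin.ext h))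
      simp at this
      omega
    simp only [getElem?_toWord _ (show i < n by omega),
      getElem?_toWord _ (show i - 1 < n by omega),
      Option.getD_some, Equiv.Perm.mul_apply, Fin.revPerm_apply, Fin.val_rev]
    omega
  · omega

theorem maj_toWord_revPerm_mul_add {n : ℕ} (σ : Equiv.Perm (Fin n)) :
    maj (toWord (Fin.revPerm * σ)) + maj (toWord σ) = n * (n - 1) / 2 := by
  rw [maj_add_maj_of_ligne_eq_sdiff (length_toWord σ) (ligne_toWord_revPerm_mul σ),
    sum_range_id]

theorem sum_pow_maj_toWord {K : Type*} [DivisionRing K] (n : ℕ) {q : K} (hq : q ≠ 0) :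
    ∑ σ : Equiv.Perm (Fin n), q ^ maj (toWord σ) =
      q ^ (n * (n - 1) / 2) * ∑ σ : Equiv.Perm (Fin n), (1 / q) ^ maj (toWord σ) := by
  rw [mul_sum, ← Equiv.sum_comp (Equiv.mulLeft Fin.revPerm) fun σ => q ^ maj (toWord σ)]
  refine sum_congr rfl fun σ _ => ?_
  have h := maj_toWord_revPerm_mul_add σ
  rw [Equiv.coe_mulLeft, ← h, pow_add, one_div, inv_pow,
    mul_inv_cancel_right₀ (pow_ne_zero _ hq)]

theorem stmt7_general (n : ℕ) :
    (∃ f : List ℕ → List ℕ,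
      ∀ w : List ℕ, IsPermWord n w →
        IsPermWord n (f w) ∧ majcode (f w) = deltaC (majcode w) ∧ f (f w) = w ∧
          ligne (f w) = Finset.Icc 1 (n - 1) \ ligne w) ∧
    ∀ q : ℚ, q ≠ 0 →
      ∑ σ : Equiv.Perm (Fin n), q ^ maj (toWord σ) =
        q ^ (n * (n - 1) / 2) * ∑ σ : Equiv.Perm (Fin n), (1 / q) ^ maj (toWord σ) := by
  refine ⟨⟨majDual n, fun w hw => ?_⟩, fun q hq => sum_pow_maj_toWord n hq⟩
  obtain ⟨hperm, hligne, hinv⟩ := majDual_spec hw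
  exact ⟨hperm, majcode_majDual hw, hinv, hligne⟩

theorem stmt7 (n : ℕ) (hn : 1 ≤ n) :
    (∃ f : List ℕ → List ℕ,
      ∀ w : List ℕ, IsPermWord n w →
        IsPermWord n (f w) ∧ majcode (f w) = deltaC (majcode w) ∧ f (f w) = w ∧
          ligne (f w) = Finset.Icc 1 (n - 1) \ ligne w) ∧
    ∀ q : ℚ, q ≠ 0 →
      ∑ σ : Equiv.Perm (Fin n), q ^ maj (toWord σ) =
        q ^ (n * (n - 1) / 2) * ∑ σ : Equiv.Perm (Fin n), (1 / q) ^ maj (toWord σ) :=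
  stmt7_general n
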